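/- Let H be a self-adjoint operator on a separable complex Hilbert space ℋ and α ∈ (0,1]. Then every x ∈ D(|H|^α) belongs to the Favard space F_α of the unitary one-parameter group T_t^S := e^{-itH}, and |x|_{F_α}² ≤ g_α² ‖|H|^α x‖², i.e. ‖e^{-itH}x − x‖ ≤ g_α ‖|H|^α x‖ t^α for all t > 0. -/

import Mathlib

/-!
By the spectral theorem, `‖e^{-itH}x - x‖² = ∫ (2 - 2 cos (ts)) dμ_x(s)`. Since
`2 - 2 cos u ≤ min (u², 4) ≤ 4^{1-α} |u|^{2α}`, this is at most `4^{1-α} t^{2α} ‖|H|^α x‖²`.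
Finally `g_α = 2^{1-α} (α^α (1-α)^{1-α})^{-1/2} ≥ 2^{1-α}`.
-/

open scoped ENNReal NNReal
open MeasureTheory

noncomputable section

local notation "⟪" x ", " y "⟫" => @inner ℂ _ _ x y

/-- `ζ_α := (2α/(1-α))^{1-α} + 2(2α/(1-α))^{-α}` for `α ∈ (0,1)`, and `ζ₁ := 1`. -/
def zetaC (α : ℝ) : ℝ :=
  if α = 1 then 1 else (2 * α / (1 - α)) ^ (1 - α) + 2 * (2 * α / (1 - α)) ^ (-α)

/-- `g_α := ζ_α (1-α)^{(1-α)/2} α^{α/2}`. -/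
def gC (α : ℝ) : ℝ := zetaC α * (1 - α) ^ ((1 - α) / 2) * α ^ (α / 2)

/-- The `p`-th absolute spectral moment `∫ |s|^p dμ_x(s)` of the (vector-indexed) spectral
measure family `μ`; for the spectral measure of a self-adjoint operator `H` this is
`‖|H|^{p/2} x‖²` (possibly `∞`). -/
def specMoment {ℋ : Type*} [NormedAddCommGroup ℋ] [InnerProductSpace ℂ ℋ]
    (μ : ℋ → Measure ℝ) (p : ℝ) (x : ℋ) : ℝ≥0∞ :=
  ∫⁻ s, ENNReal.ofReal (|s| ^ p) ∂(μ x)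

open Real

lemma le_rpow_mul_rpow_of_le_of_le {v a b α : ℝ} (hv : 0 ≤ v) (ha : v ≤ a) (hb : v ≤ b)
    (hα0 : 0 ≤ α) (hα1 : α ≤ 1) : v ≤ a ^ (1 - α) * b ^ α :=
  calc v = v ^ (1 - α) * v ^ α := by rw [← rpow_add' hv (by norm_num), sub_add_cancel, rpow_one]
    _ ≤ a ^ (1 - α) * b ^ α :=
      mul_le_mul (rpow_le_rpow hv ha (by linarith)) (rpow_le_rpow hv hb hα0)
        (rpow_nonneg hv _) (rpow_nonneg (hv.trans ha) _)

lemma two_sub_two_cos_le {α : ℝ} (hα0 : 0 ≤ α) (hα1 : α ≤ 1) (u : ℝ) :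
    2 - 2 * cos u ≤ (2 ^ (1 - α) * |u| ^ α) ^ 2 := by
  have hv : 0 ≤ 2 - 2 * cos u := by linarith [cos_le_one u]
  have h2 : √(2 - 2 * cos u) ≤ 2 :=
    sqrt_le_iff.2 ⟨zero_le_two, by linarith [neg_one_le_cos u]⟩
  have hu : √(2 - 2 * cos u) ≤ |u| := by
    rw [← sqrt_sq_eq_abs]
    exact sqrt_le_sqrt (by linarith [one_sub_sq_div_two_le_cos (x := u)])
  calc 2 - 2 * cos u = √(2 - 2 * cos u) ^ 2 := (sq_sqrt hv).symm
    _ ≤ (2 ^ (1 - α) * |u| ^ α) ^ 2 :=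
      pow_le_pow_left₀ (sqrt_nonneg _)
        (le_rpow_mul_rpow_of_le_of_le (sqrt_nonneg _) h2 hu hα0 hα1) 2

lemma re_integral_exp_neg_I_mul {ν : Measure ℝ} [IsFiniteMeasure ν] (t : ℝ) :
    (∫ s, Complex.exp (-(Complex.I * t * s)) ∂ν).re = ∫ s, cos (t * s) ∂ν := by
  have hint : Integrable (fun s : ℝ => Complex.exp (-(Complex.I * t * s))) ν := by
    refine (integrable_const (1 : ℝ)).mono' (by fun_prop) (.of_forall fun s => ?_)
    rw [Complex.norm_exp, show (-(Complex.I * t * s)).re = 0 by simp, exp_zero]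
  rw [← RCLike.re_to_complex, ← integral_re hint]
  refine integral_congr_ae (.of_forall fun s => ?_)
  dsimp only
  rw [RCLike.re_to_complex, show -(Complex.I * t * s) = ((-(t * s) : ℝ) : ℂ) * Complex.I by
    push_cast; ring, Complex.exp_ofReal_mul_I_re, cos_neg]

lemma ofReal_norm_sub_sq_eq_lintegral {ℋ : Type*} [NormedAddCommGroup ℋ] [InnerProductSpace ℂ ℋ]
    {x y : ℋ} {ν : Measure ℝ} {t : ℝ} (hy : ‖y‖ = ‖x‖) (hν : ν Set.univ = ENNReal.ofReal (‖x‖ ^ 2))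
    (hxy : ⟪x, y⟫ = ∫ s, Complex.exp (-(Complex.I * t * s)) ∂ν) :
    ENNReal.ofReal (‖y - x‖ ^ 2) = ∫⁻ s, ENNReal.ofReal (2 - 2 * cos (t * s)) ∂ν := by
  have : IsFiniteMeasure ν := ⟨by rw [hν]; exact ENNReal.ofReal_lt_top⟩
  have hcos : Integrable (fun s : ℝ => cos (t * s)) ν :=
    (integrable_const (1 : ℝ)).mono' (by fun_prop) (.of_forall fun s => abs_cos_le_one _)
  have hint : Integrable (fun s : ℝ => 2 - 2 * cos (t * s)) ν :=
    (integrable_const 2).sub (hcos.const_mul 2)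
  have hnorm : ‖y - x‖ ^ 2 = ∫ s, (2 - 2 * cos (t * s)) ∂ν := by
    rw [norm_sub_sq (𝕜 := ℂ), hy, ← inner_re_symm, hxy, RCLike.re_to_complex,
      re_integral_exp_neg_I_mul, integral_sub (integrable_const 2) (hcos.const_mul 2),
      integral_const, integral_const_mul, smul_eq_mul, measureReal_def, hν,
      ENNReal.toReal_ofReal (by positivity)]
    ring
  rw [hnorm, ofReal_integral_eq_lintegral_ofReal hint
    (.of_forall fun s => by simp only [Pi.zero_apply]; linarith [cos_le_one (t * s)])]

lemma lintegral_two_sub_two_cos_le {ν : Measure ℝ} {α : ℝ} (hα0 : 0 ≤ α) (hα1 : α ≤ 1) (t : ℝ) :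
    ∫⁻ s, ENNReal.ofReal (2 - 2 * cos (t * s)) ∂ν ≤
      ENNReal.ofReal ((2 ^ (1 - α) * |t| ^ α) ^ 2) * ∫⁻ s, ENNReal.ofReal (|s| ^ (2 * α)) ∂ν := by
  rw [← lintegral_const_mul' _ _ ENNReal.ofReal_ne_top]
  refine lintegral_mono fun s => ?_
  rw [← ENNReal.ofReal_mul (by positivity), mul_comm 2 α, rpow_mul (abs_nonneg s), rpow_two,
    ← mul_pow, mul_assoc, ← mul_rpow (abs_nonneg t) (abs_nonneg s), ← abs_mul]
  exact ENNReal.ofReal_le_ofReal (two_sub_two_cos_le hα0 hα1 (t * s))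

lemma zetaC_eq {α : ℝ} (h0 : 0 < α) (h1 : α < 1) :
    zetaC α = 2 ^ (1 - α) * α ^ (-α) * (1 - α) ^ (α - 1) := by
  have hb : 0 < 1 - α := by linarith
  have hc : 0 < 2 * α / (1 - α) := by positivity
  rw [zetaC, if_neg h1.ne, rpow_sub hc, rpow_neg hc.le, rpow_one, div_rpow (by positivity) hb.le,
    mul_rpow zero_le_two h0.le, rpow_sub two_pos, rpow_neg h0.le, rpow_sub hb, rpow_one, rpow_one]
  field_simp
  ring

lemma gC_eq {α : ℝ} (h0 : 0 < α) (h1 : α < 1) :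
    gC α = 2 ^ (1 - α) * α ^ (-α / 2) * (1 - α) ^ ((α - 1) / 2) := by
  have hb : 0 < 1 - α := by linarith
  rw [gC, zetaC_eq h0 h1, show -α / 2 = -α + α / 2 by ring, rpow_add h0,
    show (α - 1) / 2 = α - 1 + (1 - α) / 2 by ring, rpow_add hb]
  ring

lemma two_rpow_one_sub_le_gC {α : ℝ} (h0 : 0 < α) (h1 : α ≤ 1) : (2:ℝ) ^ (1 - α) ≤ gC α := by
  rcases h1.eq_or_lt with rfl | h1
  · simp [gC, zetaC]
  have hb : 0 < 1 - α := by linarith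
  rw [gC_eq h0 h1]
  calc (2:ℝ) ^ (1 - α) = 2 ^ (1 - α) * 1 * 1 := by ring
    _ ≤ 2 ^ (1 - α) * α ^ (-α / 2) * (1 - α) ^ ((α - 1) / 2) := by
      gcongr
      · exact one_le_rpow_of_pos_of_le_one_of_nonpos h0 h1.le (by linarith)
      · exact one_le_rpow_of_pos_of_le_one_of_nonpos hb (by linarith) (by linarith)

theorem statement11_general
    {ℋ : Type*} [NormedAddCommGroup ℋ] [InnerProductSpace ℂ ℋ]
    (μ : ℋ → Measure ℝ)
    (hμtot : ∀ x : ℋ, μ x Set.univ = ENNReal.ofReal (‖x‖ ^ 2))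
    (T : ℝ → ℋ →L[ℂ] ℋ)
    (hTiso : ∀ (t : ℝ) (x : ℋ), ‖T t x‖ = ‖x‖)
    (hμT : ∀ (x : ℋ) (t : ℝ), ⟪x, T t x⟫ = ∫ s, Complex.exp (-(Complex.I * t * s)) ∂(μ x))
    (α : ℝ) (hα : α ∈ Set.Ioc (0 : ℝ) 1)
    (A : ℋ →ₗ.[ℂ] ℋ)
    (hAval : ∀ x : A.domain, ENNReal.ofReal (‖A x‖ ^ 2) = specMoment μ (2 * α) (x : ℋ))
    (x : ℋ) (hx : x ∈ A.domain) :
    ∀ t : ℝ, 0 < t → ‖T t x - x‖ ≤ gC α * ‖A ⟨x, hx⟩‖ * t ^ α := by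
  intro t ht
  obtain ⟨hα0, hα1⟩ := hα
  have hmom : ∫⁻ s, ENNReal.ofReal (|s| ^ (2 * α)) ∂(μ x) = ENNReal.ofReal (‖A ⟨x, hx⟩‖ ^ 2) :=
    (hAval ⟨x, hx⟩).symm
  have hsq : ‖T t x - x‖ ^ 2 ≤ (2 ^ (1 - α) * t ^ α * ‖A ⟨x, hx⟩‖) ^ 2 := by
    have h := (ofReal_norm_sub_sq_eq_lintegral (hTiso t x) (hμtot x) (hμT x t)).trans_le
      (lintegral_two_sub_two_cos_le hα0.le hα1 t)
    rw [hmom, ← ENNReal.ofReal_mul (by positivity), abs_of_pos ht, ← mul_pow] at h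
    exact (ENNReal.ofReal_le_ofReal_iff (by positivity)).1 h
  calc ‖T t x - x‖ ≤ 2 ^ (1 - α) * t ^ α * ‖A ⟨x, hx⟩‖ :=
        (pow_le_pow_iff_left₀ (norm_nonneg _) (by positivity) two_ne_zero).1 hsq
    _ ≤ gC α * ‖A ⟨x, hx⟩‖ * t ^ α := by
        rw [mul_right_comm]
        gcongr
        exact two_rpow_one_sub_le_gC hα0 hα1

/-- Favard spaces of unitary groups.  `H` self-adjoint on a separable
complex Hilbert space (encoded by its unitary group `T t = e^{-itH}` and spectral measure
family `μ`), `α ∈ (0,1]`, `A = |H|^α`.  Every `x ∈ D(|H|^α)` belongs to the Favard space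
`F_α` of `(T_t)` with `|x|_{F_α} ≤ g_α ‖|H|^α x‖`, i.e.
`‖e^{-itH}x − x‖ ≤ g_α ‖|H|^α x‖ t^α` for all `t > 0`. -/
theorem statement11
    {ℋ : Type*} [NormedAddCommGroup ℋ] [InnerProductSpace ℂ ℋ] [CompleteSpace ℋ]
    [TopologicalSpace.SeparableSpace ℋ]
    (H : ℋ →ₗ.[ℂ] ℋ) (hHsa : IsSelfAdjoint H)
    (μ : ℋ → Measure ℝ)
    (hμtot : ∀ x : ℋ, μ x Set.univ = ENNReal.ofReal (‖x‖ ^ 2))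
    (hHdom : ∀ x : ℋ, x ∈ H.domain ↔ specMoment μ 2 x ≠ ∞)
    (hHval : ∀ x : H.domain, ⟪(x : ℋ), H x⟫ = ∫ s, (s : ℂ) ∂(μ x))
    (T : ℝ → ℋ →L[ℂ] ℋ)
    (hT0 : T 0 = ContinuousLinearMap.id ℂ ℋ)
    (hTadd : ∀ t s : ℝ, (T t).comp (T s) = T (t + s))
    (hTiso : ∀ (t : ℝ) (x : ℋ), ‖T t x‖ = ‖x‖)
    (hμT : ∀ (x : ℋ) (t : ℝ), ⟪x, T t x⟫ = ∫ s, Complex.exp (-(Complex.I * t * s)) ∂(μ x))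
    (α : ℝ) (hα : α ∈ Set.Ioc (0 : ℝ) 1)
    (A : ℋ →ₗ.[ℂ] ℋ)
    (hAdom : ∀ x : ℋ, x ∈ A.domain ↔ specMoment μ (2 * α) x ≠ ∞)
    (hAval : ∀ x : A.domain, ENNReal.ofReal (‖A x‖ ^ 2) = specMoment μ (2 * α) (x : ℋ))
    (x : ℋ) (hx : x ∈ A.domain) :
    ∀ t : ℝ, 0 < t → ‖T t x - x‖ ≤ gC α * ‖A ⟨x, hx⟩‖ * t ^ α :=
  statement11_general μ hμtot T hTiso hμT α hα A hAval x hx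

end
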